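/- Every simplicial complex satisfying Serre's condition (S_2) over some field is normal, i.e., it is pure and the link of every face of codimension at least 2 is connected; conversely every such normal complex is (S_2) over every field. -/

import Mathlib

noncomputable section

/-! ## Singular homology machinery -/

namespace SimplexCategory

/-- The old Mathlib `SimplexCategory.toTopObj` (removed from Mathlib), restated verbatim. -/
def toTopObj (x : SimplexCategory) : Set (Fin (x.len + 1) → NNReal) :=
  {f | ∑ i, f i = 1}

/-- The old Mathlib `SimplexCategory.toTopMap` (removed from Mathlib), restated verbatim. -/
def toTopMap {x y : SimplexCategory} (f : x ⟶ y) (g : x.toTopObj) : y.toTopObj :=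
  ⟨fun i => ∑ j ∈ Finset.univ.filter (fun j => f.toOrderHom j = i), (g : Fin (x.len + 1) → NNReal) j, by
    simp only [toTopObj, Set.mem_ofPred_eq]
    rw [← Finset.sum_biUnion]
    · have hg : ∑ i, (g : Fin (x.len + 1) → NNReal) i = 1 := g.2
      convert hg
      simp [Finset.eq_univ_iff_forall]
    · convert Set.pairwiseDisjoint_filter _ _ _⟩

theorem continuous_toTopMap {x y : SimplexCategory} (f : x ⟶ y) : Continuous (toTopMap f) := by
  refine Continuous.subtype_mk (continuous_pi fun i => ?_) _
  exact continuous_finsetSum _ (fun j _ => (continuous_apply _).comp continuous_subtype_val)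

end SimplexCategory

/-- The topological standard `n`-simplex. -/
abbrev TopSimplex (n : ℕ) : Type := (SimplexCategory.mk n).toTopObj

/-- The `i`-th face inclusion of topological simplices, as a continuous map. -/
def faceIncl {n : ℕ} (i : Fin (n + 2)) : C(TopSimplex n, TopSimplex (n + 1)) :=
  ⟨SimplexCategory.toTopMap (SimplexCategory.δ i), SimplexCategory.continuous_toTopMap _⟩

/-- Singular `n`-chains of `X` with coefficients in `k`:
the free `k`-module on continuous maps from the standard `n`-simplex. -/
abbrev SChain (k : Type) [Field k] (X : Type*) [TopologicalSpace X] (n : ℕ) :=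
  C(TopSimplex n, X) →₀ k

variable (k : Type) [Field k]

/-- The singular boundary map `C_{n+1}(X) → C_n(X)`. -/
def sBoundary (X : Type*) [TopologicalSpace X] (n : ℕ) :
    SChain k X (n + 1) →ₗ[k] SChain k X n :=
  Finsupp.lsum k fun σ => ∑ i : Fin (n + 2),
    ((-1 : k) ^ (i : ℕ)) • Finsupp.lsingle (σ.comp (faceIncl i))

/-- The chain map induced by a continuous map. -/
def chainMap {A X : Type*} [TopologicalSpace A] [TopologicalSpace X] (f : C(A, X)) (n : ℕ) :
    SChain k A n →ₗ[k] SChain k X n :=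
  Finsupp.lmapDomain k k fun σ => f.comp σ

lemma chainMap_comm {A X : Type*} [TopologicalSpace A] [TopologicalSpace X] (f : C(A, X))
    (n : ℕ) :
    (sBoundary k X n).comp (chainMap k f (n + 1)) = (chainMap k f n).comp (sBoundary k A n) := by
  apply Finsupp.lhom_ext
  intro σ b
  simp only [LinearMap.coe_comp, Function.comp_apply, chainMap, Finsupp.lmapDomain_apply,
    Finsupp.mapDomain_single, sBoundary, Finsupp.lsum_single, LinearMap.sum_apply,
    Finset.sum_apply, LinearMap.smul_apply, Finsupp.lsingle_apply, map_sum,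
    Finsupp.mapDomain_smul, ContinuousMap.comp_assoc]

/-- Chains of `X` supported on a subspace `A ⊆ X`
(the image of the chains of `A` under the inclusion). -/
def subChains (X : Type*) [TopologicalSpace X] (A : Set X) (n : ℕ) :
    Submodule k (SChain k X n) :=
  LinearMap.range (chainMap k ⟨(Subtype.val : A → X), continuous_subtype_val⟩ n)

/-- Relative singular `n`-chains of the pair `(X, A)`. -/
abbrev RelChain (X : Type*) [TopologicalSpace X] (A : Set X) (n : ℕ) :=
  SChain k X n ⧸ subChains k X A n

lemma subChains_le (X : Type*) [TopologicalSpace X] (A : Set X) (n : ℕ) :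
    subChains k X A (n + 1) ≤ (subChains k X A n).comap (sBoundary k X n) := by
  rintro x ⟨y, rfl⟩
  exact ⟨sBoundary k A n y, (LinearMap.congr_fun (chainMap_comm k _ n) y).symm⟩

/-- The boundary map on relative singular chains. -/
def relBoundary (X : Type*) [TopologicalSpace X] (A : Set X) (n : ℕ) :
    RelChain k X A (n + 1) →ₗ[k] RelChain k X A n :=
  Submodule.mapQ _ _ (sBoundary k X n) (subChains_le k X A n)

/-- Relative singular cycles. -/
def relCycles (X : Type*) [TopologicalSpace X] (A : Set X) :
    (n : ℕ) → Submodule k (RelChain k X A n)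
  | 0 => ⊤
  | n + 1 => LinearMap.ker (relBoundary k X A n)

/-- Relative singular homology `H_n(X, A; k)`: cycles modulo boundaries. -/
def RelHomology (X : Type*) [TopologicalSpace X] (A : Set X) (n : ℕ) : Type _ :=
  ↥((relCycles k X A n).map (LinearMap.range (relBoundary k X A n)).mkQ)

/-- Local homology `H_n(X, X - p; k)`. -/
def LocalHomology (X : Type*) [TopologicalSpace X] (p : X) (n : ℕ) : Type _ :=
  RelHomology k X ({p}ᶜ) n

/-- Local homology with integer index (trivial in negative degrees). -/
def LocalHomologyZ (X : Type*) [TopologicalSpace X] (p : X) : ℤ → Type _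
  | .ofNat n => LocalHomology k X p n
  | .negSucc _ => PUnit

instance (X : Type*) [TopologicalSpace X] (p : X) (n : ℕ) :
    AddCommGroup (LocalHomology k X p n) := by
  unfold LocalHomology RelHomology; infer_instance

instance (X : Type*) [TopologicalSpace X] (p : X) (n : ℕ) :
    Module k (LocalHomology k X p n) := by
  unfold LocalHomology RelHomology; infer_instance

instance (X : Type*) [TopologicalSpace X] (p : X) (j : ℤ) :
    AddCommGroup (LocalHomologyZ k X p j) := by
  unfold LocalHomologyZ; cases j <;> infer_instance

instance (X : Type*) [TopologicalSpace X] (p : X) (j : ℤ) :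
    Module k (LocalHomologyZ k X p j) := by
  unfold LocalHomologyZ; cases j <;> infer_instance

/-- The augmentation map on singular `0`-chains. -/
def sAugment (X : Type*) [TopologicalSpace X] : SChain k X 0 →ₗ[k] k :=
  Finsupp.lsum k fun _ => LinearMap.id

/-- Reduced singular cycles (using the augmented chain complex). -/
def redCycles (X : Type*) [TopologicalSpace X] : (n : ℕ) → Submodule k (SChain k X n)
  | 0 => LinearMap.ker (sAugment k X)
  | n + 1 => LinearMap.ker (sBoundary k X n)

/-- Reduced singular homology `H̃_n(X; k)`. -/
def RedHomology (X : Type*) [TopologicalSpace X] (n : ℕ) : Type _ :=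
  ↥((redCycles k X n).map (LinearMap.range (sBoundary k X n)).mkQ)

/-! ## Abstract simplicial complexes and their geometric realization -/

/-- A (possibly empty) abstract simplicial complex on the vertex set `V`,
whose faces include the empty set whenever there is any face. -/
structure ASC (V : Type) where
  faces : Set (Finset V)
  down_closed : ∀ {s t : Finset V}, s ∈ faces → t ⊆ s → t ∈ faces

/-- The dimension of a face: its cardinality minus one. -/
def dimF {V : Type} (s : Finset V) : ℤ := (s.card : ℤ) - 1

namespace ASC

variable {V : Type}

/-- The link of a face `σ`. -/
def link [DecidableEq V] (K : ASC V) (σ : Finset V) : ASC V where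
  faces := {τ | τ ∩ σ = ∅ ∧ τ ∪ σ ∈ K.faces}
  down_closed := by
    rintro s t ⟨hd, hu⟩ hts
    refine ⟨Finset.subset_empty.mp ?_, K.down_closed hu (Finset.union_subset_union hts Finset.Subset.rfl)⟩
    rw [← hd]
    exact Finset.inter_subset_inter hts Finset.Subset.rfl

/-- A facet: an inclusion-maximal face. -/
def IsFacet (K : ASC V) (s : Finset V) : Prop :=
  s ∈ K.faces ∧ ∀ t ∈ K.faces, s ⊆ t → s = t

/-- The subcomplex of `K` generated by a given family of faces of `K`. -/
def gen (K : ASC V) (F : Set (Finset V)) : ASC V where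
  faces := {t | ∃ s ∈ F ∩ K.faces, t ⊆ s}
  down_closed := by rintro s t ⟨u, hu, hsu⟩ hts; exact ⟨u, hu, hts.trans hsu⟩

/-- `K^⟨m⟩`: the subcomplex generated by all facets of dimension at least `m`. -/
def aboveSkel (K : ASC V) (m : ℤ) : ASC V :=
  K.gen {s | K.IsFacet s ∧ m ≤ dimF s}

/-- `K^[m]`: the pure `m`-skeleton, generated by all `m`-dimensional faces. -/
def pureSkel (K : ASC V) (m : ℤ) : ASC V :=
  K.gen {s | dimF s = m}

/-- The `m`-skeleton: all faces of dimension at most `m`. -/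
def skel (K : ASC V) (m : ℤ) : ASC V where
  faces := {s | s ∈ K.faces ∧ dimF s ≤ m}
  down_closed := by
    rintro s t ⟨hs, hds⟩ hts
    refine ⟨K.down_closed hs hts, le_trans ?_ hds⟩
    simp only [dimF, sub_le_sub_iff_right, Nat.cast_le]
    exact Finset.card_le_card hts

/-- `K` has dimension `n`. -/
def hasDim (K : ASC V) (n : ℤ) : Prop :=
  (∃ s ∈ K.faces, dimF s = n) ∧ ∀ s ∈ K.faces, dimF s ≤ n

/-- The geometric realization of `K`, as a subset of `V → ℝ`. -/
def realizSet (K : ASC V) [Fintype V] : Set (V → ℝ) :=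
  {f | (∀ v, 0 ≤ f v) ∧ (∑ v, f v) = 1 ∧ ∃ s ∈ K.faces, ∀ v, f v ≠ 0 → v ∈ s}

/-- The geometric realization of `K`, as a topological space. -/
abbrev space (K : ASC V) [Fintype V] : Type _ := ↥(K.realizSet)

/-- The set of points of `|K|` lying in the realization of a subcomplex `L`. -/
def subSpace (K : ASC V) [Fintype V] (L : ASC V) : Set K.space :=
  {p | ∃ s ∈ L.faces, ∀ v, (p : V → ℝ) v ≠ 0 → v ∈ s}

/-- `p` lies in the (relative) interior of the face `σ`, i.e. the support of `p` is
exactly `σ`. -/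
def inInterior (K : ASC V) [Fintype V] (σ : Finset V) (p : K.space) : Prop :=
  ∀ v, (p : V → ℝ) v ≠ 0 ↔ v ∈ σ

end ASC

/-! ## Simplicial homology -/

/-- The `n`-dimensional faces of `K` (faces of cardinality `n+1`). -/
def FacesDim {V : Type} (K : ASC V) (n : ℕ) : Type _ :=
  {s : Finset V // s ∈ K.faces ∧ s.card = n + 1}

/-- Simplicial `n`-chains. -/
abbrev SimpChain {V : Type} (K : ASC V) (n : ℕ) : Type _ := FacesDim K n →₀ k

/-- The `i`-th vertex of a face of cardinality `n` (in the vertex order). -/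
def faceVertex {V : Type} [LinearOrder V] {n : ℕ} (s : Finset V) (hs : s.card = n)
    (i : Fin n) : V :=
  (s.sort (· ≤ ·))[(i : ℕ)]'(by rw [Finset.length_sort, hs]; exact i.isLt)

lemma faceVertex_mem {V : Type} [LinearOrder V] {n : ℕ} (s : Finset V) (hs : s.card = n)
    (i : Fin n) : faceVertex s hs i ∈ s :=
  (Finset.mem_sort _).mp (List.getElem_mem _)

/-- The simplicial boundary map. -/
def simpBoundary {V : Type} [LinearOrder V] (K : ASC V) (n : ℕ) :
    SimpChain k K (n + 1) →ₗ[k] SimpChain k K n :=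
  Finsupp.lsum k fun s => ∑ i : Fin (n + 2),
    ((-1 : k) ^ (i : ℕ)) • Finsupp.lsingle
      ⟨s.1.erase (faceVertex s.1 s.2.2 i),
        K.down_closed s.2.1 (Finset.erase_subset _ _), by
          rw [Finset.card_erase_of_mem (faceVertex_mem s.1 s.2.2 i), s.2.2]; omega⟩

/-- The simplicial augmentation map. -/
def simpAugment {V : Type} (K : ASC V) : SimpChain k K 0 →ₗ[k] k :=
  Finsupp.lsum k fun _ => LinearMap.id

/-- Reduced simplicial cycles (augmented chain complex). -/
def simpRedCycles {V : Type} [LinearOrder V] (K : ASC V) :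
    (n : ℕ) → Submodule k (SimpChain k K n)
  | 0 => (LinearMap.ker (simpAugment k K) : Submodule k (SimpChain k K 0))
  | n + 1 => LinearMap.ker (simpBoundary k K n)

/-- Reduced simplicial homology `H̃_n(K; k)` in degree `n : ℕ`. -/
def SimpRedHomology {V : Type} [LinearOrder V] (K : ASC V) (n : ℕ) : Type _ :=
  ↥((simpRedCycles k K n).map (LinearMap.range (simpBoundary k K n)).mkQ)

instance {V : Type} [LinearOrder V] (K : ASC V) (n : ℕ) :
    AddCommGroup (SimpRedHomology k K n) := by unfold SimpRedHomology; infer_instance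

instance {V : Type} [LinearOrder V] (K : ASC V) (n : ℕ) :
    Module k (SimpRedHomology k K n) := by unfold SimpRedHomology; infer_instance

/-- The cokernel of the simplicial augmentation: reduced homology in degree `-1`. -/
def augCoker {V : Type} (K : ASC V) : Type _ :=
  k ⧸ LinearMap.range (simpAugment k K)

instance {V : Type} (K : ASC V) : AddCommGroup (augCoker k K) := by
  unfold augCoker; infer_instance

instance {V : Type} (K : ASC V) : Module k (augCoker k K) := by
  unfold augCoker; infer_instance

/-- Reduced simplicial homology with integer index: in degree `-1` it is the cokernel of the
augmentation, and it is trivial in degrees below `-1`. -/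
def SimpRedHomologyZ {V : Type} [LinearOrder V] (K : ASC V) : ℤ → Type _
  | .ofNat n => SimpRedHomology k K n
  | .negSucc 0 => augCoker k K
  | .negSucc (_ + 1) => PUnit

instance {V : Type} [LinearOrder V] (K : ASC V) (j : ℤ) :
    AddCommGroup (SimpRedHomologyZ k K j) := by
  unfold SimpRedHomologyZ
  match j with
  | .ofNat n => infer_instance
  | .negSucc 0 => infer_instance
  | .negSucc (_ + 1) => infer_instance

instance {V : Type} [LinearOrder V] (K : ASC V) (j : ℤ) :
    Module k (SimpRedHomologyZ k K j) := by
  unfold SimpRedHomologyZ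
  match j with
  | .ofNat n => infer_instance
  | .negSucc 0 => infer_instance
  | .negSucc (_ + 1) => infer_instance

/-! ## Serre conditions -/

/-- Serre's condition `(S_r)` over `k` for a `(d-1)`-dimensional complex `K`. -/
def IsSerre {V : Type} [LinearOrder V] (K : ASC V) (d r : ℕ) : Prop :=
  ∀ σ ∈ K.faces, ∀ i : ℕ,
    (i : ℤ) < min ((r : ℤ) - 1) ((d : ℤ) - dimF σ - 2) →
      Subsingleton (SimpRedHomology k (K.link σ) i)

/-- Sequentially `(S_r)`: every pure `m`-skeleton (an `m`-dimensional complex) is `(S_r)`. -/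
def SeqSerre {V : Type} [LinearOrder V] (K : ASC V) (r : ℕ) : Prop :=
  ∀ m : ℕ, IsSerre k (K.pureSkel (m : ℤ)) (m + 1) r

/-! ## Topological notions -/

/-- The open unit ball in `ℝ^n`. -/
def openBall (n : ℕ) : Set (EuclideanSpace ℝ (Fin n)) := Metric.ball 0 1

/-- `p` has a neighborhood homeomorphic to an open `j`-dimensional ball. -/
def HasBallNbhd {X : Type*} [TopologicalSpace X] (p : X) (j : ℕ) : Prop :=
  ∃ U ∈ nhds p, Nonempty (↥U ≃ₜ ↥(openBall j))

/-- `D_j(X; k)`: the points with nonvanishing `j`-th local homology. -/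
def Dset (X : Type*) [TopologicalSpace X] (j : ℕ) : Set X :=
  {p | Nontrivial (LocalHomology k X p j)}

/-- `X^⟨m⟩`: the closure of the union of the `D_j(X; k)` for `j ≥ m`. -/
def aboveSet (X : Type*) [TopologicalSpace X] (m : ℕ) : Set X :=
  closure (⋃ j : ℕ, ⋃ _ : m ≤ j, Dset k X j)

/-- The dimension of a subset `S` of a space is at most `ℓ`: `S` contains no open ball of
dimension greater than `ℓ`.  (The empty set has negative dimension.) -/
def SetDimLE {X : Type*} [TopologicalSpace X] (S : Set X) (ℓ : ℤ) : Prop :=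
  ∀ n : ℕ, (∃ B : Set X, B ⊆ S ∧ Nonempty (↥B ≃ₜ ↥(openBall n))) → (n : ℤ) ≤ ℓ


/-- A `(d-1)`-dimensional complex is normal if it is pure and the link of every face of
codimension at least `2` is connected. -/
def IsNormal {V : Type} [DecidableEq V] [Fintype V] (K : ASC V) (d : ℕ) : Prop :=
  (∀ s : Finset V, K.IsFacet s → dimF s = (d : ℤ) - 1) ∧
  ∀ σ ∈ K.faces, dimF σ ≤ (d : ℤ) - 3 → ConnectedSpace (K.link σ).space

/-!
Both conditions reduce to edge-path connectivity of the links of faces of dimension at most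
`d - 3`. For any complex `L`, `H̃₀(L; k) = 0` says that every `0`-cycle `[u] - [v]` bounds, which
happens exactly when `u` and `v` are joined by an edge path (the indicator of an edge-path
component kills all boundaries); and `|L|` is connected exactly when `L` has a vertex and is
edge-path connected, since a point of `|L|` lies in a closed simplex together with its vertices.
Purity follows from these link conditions: were a facet `τ` of dimension below `d - 1`, then by
downward induction on `ρ ⊆ τ` the connectivity of `link ρ` confines every face containing `ρ`
to `τ`, so `τ` would contain a `(d - 1)`-face.
-/

namespace ASC

variable {V : Type}

/-- Reflexive on vertices; on distinct vertices it is the edge relation of the `1`-skeleton. -/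
def Adj (L : ASC V) (u v : V) : Prop := ∃ s ∈ L.faces, u ∈ s ∧ v ∈ s

/-- Unlike `ConnectedSpace L.space`, this holds vacuously when `L` has no vertex. -/
def EdgePathConnected (L : ASC V) : Prop :=
  ∀ u v, {u} ∈ L.faces → {v} ∈ L.faces → Relation.ReflTransGen L.Adj u v

lemma singleton_mem_of_mem {L : ASC V} {s : Finset V} (hs : s ∈ L.faces) {v : V} (hv : v ∈ s) :
    {v} ∈ L.faces :=
  L.down_closed hs (Finset.singleton_subset_iff.mpr hv)

lemma Adj.symm {L : ASC V} {u v : V} (h : L.Adj u v) : L.Adj v u := by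
  obtain ⟨s, hs, hu, hv⟩ := h
  exact ⟨s, hs, hv, hu⟩

lemma Adj.singleton_mem_left {L : ASC V} {u v : V} (h : L.Adj u v) : {u} ∈ L.faces := by
  obtain ⟨s, hs, hu, -⟩ := h
  exact singleton_mem_of_mem hs hu

lemma Adj.pair_mem [DecidableEq V] {L : ASC V} {u v : V} (h : L.Adj u v) : {u, v} ∈ L.faces := by
  obtain ⟨s, hs, hu, hv⟩ := h
  exact L.down_closed hs (Finset.insert_subset hu (Finset.singleton_subset_iff.mpr hv))

end ASC

open ASC

section SimplicialHomology

variable {V : Type}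

def vertexFace {L : ASC V} {v : V} (hv : {v} ∈ L.faces) : FacesDim L 0 :=
  ⟨{v}, hv, Finset.card_singleton v⟩

lemma FacesDim.exists_eq_vertexFace {L : ASC V} (s : FacesDim L 0) :
    ∃ v, ∃ hv : {v} ∈ L.faces, s = vertexFace hv := by
  obtain ⟨v, hv⟩ := Finset.card_eq_one.mp s.2.2
  exact ⟨v, hv ▸ s.2.1, Subtype.ext hv⟩

variable (L : ASC V)

open Classical in
def vertexIndicator (P : V → Prop) : SimpChain k L 0 →ₗ[k] k :=
  Finsupp.linearCombination k fun s => if ∃ v ∈ s.1, P v then 1 else 0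

open Classical in
lemma vertexIndicator_vertexFace (P : V → Prop) {v : V} (hv : {v} ∈ L.faces) :
    vertexIndicator k L P (Finsupp.single (vertexFace hv) 1) = if P v then 1 else 0 := by
  rw [vertexIndicator, Finsupp.linearCombination_single]
  simp [vertexFace]

lemma simpAugment_single (s : FacesDim L 0) (c : k) :
    simpAugment k L (Finsupp.single s c) = c := by
  simp [simpAugment]

variable [LinearOrder V]

lemma simpBoundary_single_edge {a b : V} (hab : a ≠ b) (t : FacesDim L 1) (ht : t.1 = {a, b})
    (ha : {a} ∈ L.faces) (hb : {b} ∈ L.faces) :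
    simpBoundary k L 0 (Finsupp.single t 1) =
        Finsupp.single (vertexFace ha) 1 - Finsupp.single (vertexFace hb) 1 ∨
      simpBoundary k L 0 (Finsupp.single t 1) =
        Finsupp.single (vertexFace hb) 1 - Finsupp.single (vertexFace ha) 1 := by
  set x := faceVertex t.1 t.2.2
  have hx : x 0 ≠ x 1 := fun h =>
    absurd ((Finset.sort_nodup _ _).getElem_inj_iff.mp h) (by norm_num)
  have hx_mem : ∀ i, x i = a ∨ x i = b := fun i => by
    have h : x i ∈ t.1 := faceVertex_mem _ _ i
    rwa [ht, Finset.mem_insert, Finset.mem_singleton] at h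
  have hbd : simpBoundary k L 0 (Finsupp.single t 1) =
      Finsupp.single ⟨t.1.erase (x 0), L.down_closed t.2.1 (Finset.erase_subset _ _),
          by rw [Finset.card_erase_of_mem (faceVertex_mem _ _ _), t.2.2]⟩ 1 -
        Finsupp.single ⟨t.1.erase (x 1), L.down_closed t.2.1 (Finset.erase_subset _ _),
          by rw [Finset.card_erase_of_mem (faceVertex_mem _ _ _), t.2.2]⟩ 1 := by
    rw [simpBoundary, Finsupp.lsum_single, Fin.sum_univ_two]
    simp only [LinearMap.add_apply, LinearMap.smul_apply, Fin.val_zero, Fin.val_one, pow_zero,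
      pow_one, one_smul, neg_one_smul, sub_eq_add_neg]
    rfl
  have erase_a : t.1.erase a = {b} := by rw [ht, Finset.erase_insert (by simpa using hab)]
  have erase_b : t.1.erase b = {a} := by
    rw [ht, Finset.pair_comm, Finset.erase_insert (by simpa using hab.symm)]
  rw [hbd]
  rcases hx_mem 0 with h0 | h0 <;> rcases hx_mem 1 with h1 | h1
  · exact absurd (h0.trans h1.symm) hx
  · right; congr 2 <;> apply Subtype.ext <;> simp only [h0, h1, erase_a, erase_b, vertexFace]
  · left; congr 2 <;> apply Subtype.ext <;> simp only [h0, h1, erase_a, erase_b, vertexFace]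
  · exact absurd (h0.trans h1.symm) hx

lemma sub_mem_range_simpBoundary_of_reflTransGen {a b : V} (ha : {a} ∈ L.faces)
    (hab : Relation.ReflTransGen L.Adj a b) (hb : {b} ∈ L.faces) :
    Finsupp.single (vertexFace ha) (1 : k) - Finsupp.single (vertexFace hb) 1 ∈
      LinearMap.range (simpBoundary k L 0) := by
  induction hab with
  | refl => simp
  | @tail b c _ hbc ih =>
    have hb' : {b} ∈ L.faces := hbc.singleton_mem_left
    suffices Finsupp.single (vertexFace hb') (1 : k) - Finsupp.single (vertexFace hb) 1 ∈
        LinearMap.range (simpBoundary k L 0) by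
      simpa using Submodule.add_mem _ (ih hb') this
    obtain rfl | hne := eq_or_ne b c
    · simp
    let t : FacesDim L 1 := ⟨{b, c}, hbc.pair_mem, Finset.card_pair hne⟩
    rcases simpBoundary_single_edge k L hne t rfl hb' hb with h | h
    · exact ⟨Finsupp.single t 1, h⟩
    · exact ⟨-Finsupp.single t 1, by rw [map_neg, h, neg_sub]⟩

lemma vertexIndicator_comp_simpBoundary {P : V → Prop} (hP : ∀ u v, L.Adj u v → P u → P v) :
    (vertexIndicator k L P).comp (simpBoundary k L 0) = 0 := by
  classical
  refine Finsupp.lhom_ext' fun t => LinearMap.ext_ring ?_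
  obtain ⟨a, b, hab, ht⟩ := Finset.card_eq_two.mp t.2.2
  have hadj : L.Adj a b := ⟨t.1, t.2.1, by simp [ht], by simp [ht]⟩
  have hPab : P a ↔ P b := ⟨hP a b hadj, hP b a hadj.symm⟩
  rcases simpBoundary_single_edge k L hab t ht hadj.singleton_mem_left
      hadj.symm.singleton_mem_left with h | h <;>
    simp [h, vertexIndicator_vertexFace, hPab]

lemma subsingleton_simpRedHomology_zero_iff_le :
    Subsingleton (SimpRedHomology k L 0) ↔
      LinearMap.ker (simpAugment k L) ≤ LinearMap.range (simpBoundary k L 0) := by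
  rw [SimpRedHomology, Submodule.subsingleton_iff_eq_bot, ← LinearMap.le_ker_iff_map,
    Submodule.ker_mkQ]
  rfl

lemma edgePathConnected_of_subsingleton_simpRedHomology
    (h : Subsingleton (SimpRedHomology k L 0)) : L.EdgePathConnected := by
  intro u v hu hv
  by_contra huv
  set P := Relation.ReflTransGen L.Adj u
  have hcycle : Finsupp.single (vertexFace hu) (1 : k) - Finsupp.single (vertexFace hv) 1 ∈
      LinearMap.ker (simpAugment k L) := by
    rw [LinearMap.mem_ker, map_sub, simpAugment_single, simpAugment_single, sub_self]
  obtain ⟨c, hc⟩ := (subsingleton_simpRedHomology_zero_iff_le k L).mp h hcycle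
  have hP : ∀ a b, L.Adj a b → P a → P b := fun _ _ hab ha => ha.tail hab
  have := LinearMap.congr_fun (vertexIndicator_comp_simpBoundary k L hP) c
  rw [LinearMap.comp_apply, hc, map_sub, vertexIndicator_vertexFace,
    vertexIndicator_vertexFace, if_pos .refl, if_neg huv] at this
  simp at this

lemma EdgePathConnected.subsingleton_simpRedHomology (h : L.EdgePathConnected) :
    Subsingleton (SimpRedHomology k L 0) := by
  rw [subsingleton_simpRedHomology_zero_iff_le]
  rcases isEmpty_or_nonempty (FacesDim L 0) with hempty | hne
  · intro y _
    simp [Subsingleton.elim y 0]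
  obtain ⟨v₀, hv₀, -⟩ := hne.some.exists_eq_vertexFace
  suffices ∀ y, y - simpAugment k L y • Finsupp.single (vertexFace hv₀) 1 ∈
      LinearMap.range (simpBoundary k L 0) by
    intro y hy
    simpa [LinearMap.mem_ker.mp hy] using this y
  intro y
  induction y using Finsupp.induction_linear with
  | zero => simp
  | add y z hy hz =>
    convert Submodule.add_mem _ hy hz using 1
    rw [map_add, add_smul]
    abel
  | single s c =>
    obtain ⟨v, hv, rfl⟩ := s.exists_eq_vertexFace
    have hsub := sub_mem_range_simpBoundary_of_reflTransGen k L hv (h v v₀ hv hv₀) hv₀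
    convert Submodule.smul_mem _ c hsub using 1
    simp [simpAugment_single, smul_sub, Finsupp.smul_single]

theorem subsingleton_simpRedHomology_zero_iff :
    Subsingleton (SimpRedHomology k L 0) ↔ L.EdgePathConnected :=
  ⟨edgePathConnected_of_subsingleton_simpRedHomology k L,
    EdgePathConnected.subsingleton_simpRedHomology k L⟩

end SimplicialHomology

namespace ASC

section Realization

variable {V : Type} [Fintype V] {L : ASC V}

lemma Adj.of_ne_zero (p : L.space) {u v : V} (hu : (p : V → ℝ) u ≠ 0)
    (hv : (p : V → ℝ) v ≠ 0) : L.Adj u v := by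
  obtain ⟨-, -, s, hs, hsupp⟩ := p.2
  exact ⟨s, hs, hsupp u hu, hsupp v hv⟩

lemma exists_ne_zero (p : L.space) : ∃ v, (p : V → ℝ) v ≠ 0 := by
  by_contra! h
  simpa [h] using p.2.2.1

lemma joined_of_support_subset {s : Finset V} (hs : s ∈ L.faces) {p q : L.space}
    (hp : ∀ v, (p : V → ℝ) v ≠ 0 → v ∈ s) (hq : ∀ v, (q : V → ℝ) v ≠ 0 → v ∈ s) :
    Joined p q := by
  set C := stdSimplex ℝ V ∩ {f | ∀ v ∉ s, f v = 0}
  have hC : Convex ℝ C := (convex_stdSimplex ℝ V).inter fun f hf g hg a b _ _ _ v hv => by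
    simp [hf v hv, hg v hv]
  have hCL : C ⊆ L.realizSet := fun f ⟨⟨hpos, hsum⟩, hf⟩ =>
    ⟨hpos, hsum, s, hs, fun v hv => by_contra fun hvs => hv (hf v hvs)⟩
  have mem_C : ∀ r : L.space, (∀ v, (r : V → ℝ) v ≠ 0 → v ∈ s) → (r : V → ℝ) ∈ C :=
    fun r hr => ⟨⟨r.2.1, r.2.2.1⟩, fun v hv => by_contra fun h => hv (hr v h)⟩
  exact ((hC.isPathConnected ⟨_, mem_C p hp⟩).joinedIn _ (mem_C p hp) _ (mem_C q hq)).mono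
    hCL |>.joined_subtype

lemma isOpen_setOf_exists_ne_zero (Q : V → Prop) :
    IsOpen {p : L.space | ∃ w, Q w ∧ (p : V → ℝ) w ≠ 0} := by
  simp only [Set.ofPred_exists]
  refine isOpen_iUnion fun w => ?_
  by_cases hw : Q w
  · simpa [hw] using isOpen_ne_fun ((continuous_apply w).comp continuous_subtype_val)
      continuous_const
  · simp [hw]

variable [DecidableEq V]

def vertexPoint {v : V} (hv : {v} ∈ L.faces) : L.space :=
  ⟨Pi.single v 1, fun w => by by_cases h : w = v <;> simp [h], by simp, {v}, hv,
    fun w hw => by by_contra h; simp_all⟩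

lemma vertexPoint_apply_ne_zero_iff {v : V} (hv : {v} ∈ L.faces) (w : V) :
    ((vertexPoint hv : L.space) : V → ℝ) w ≠ 0 ↔ w = v := by
  by_cases h : w = v <;> simp [vertexPoint, h]

lemma joined_vertexPoint_of_reflTransGen {u v : V} (hu : {u} ∈ L.faces)
    (huv : Relation.ReflTransGen L.Adj u v) (hv : {v} ∈ L.faces) :
    Joined (vertexPoint hu) (vertexPoint hv) := by
  induction huv with
  | refl => exact .refl _
  | @tail b c _ hbc ih =>
    have hb : {b} ∈ L.faces := hbc.singleton_mem_left
    obtain ⟨s, hs, hbs, hcs⟩ := hbc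
    refine (ih hb).trans (joined_of_support_subset hs ?_ ?_) <;>
      simpa [vertexPoint_apply_ne_zero_iff]

lemma EdgePathConnected.pathConnectedSpace (h : L.EdgePathConnected) {v : V}
    (hv : {v} ∈ L.faces) : PathConnectedSpace L.space := by
  have joined_vertex : ∀ p : L.space, ∃ w, ∃ hw : {w} ∈ L.faces, Joined p (vertexPoint hw) := by
    intro p
    obtain ⟨w, hw⟩ := exists_ne_zero p
    obtain ⟨-, -, s, hs, hsupp⟩ := p.2
    exact ⟨w, singleton_mem_of_mem hs (hsupp w hw), joined_of_support_subset hs hsupp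
      (by simpa [vertexPoint_apply_ne_zero_iff] using hsupp w hw)⟩
  refine ⟨⟨vertexPoint hv⟩, fun p q => ?_⟩
  obtain ⟨wp, hwp, hp⟩ := joined_vertex p
  obtain ⟨wq, hwq, hq⟩ := joined_vertex q
  exact (hp.trans (joined_vertexPoint_of_reflTransGen hwp (h wp wq hwp hwq) hwq)).trans hq.symm

lemma EdgePathConnected.of_connectedSpace [ConnectedSpace L.space] : L.EdgePathConnected := by
  intro u v hu hv
  by_contra huv
  set R := Relation.ReflTransGen L.Adj u
  set S := {p : L.space | ∃ w, R w ∧ (p : V → ℝ) w ≠ 0}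
  have hSc : Sᶜ = {p : L.space | ∃ w, ¬R w ∧ (p : V → ℝ) w ≠ 0} := by
    ext p
    constructor
    · intro hp
      obtain ⟨w, hw⟩ := exists_ne_zero p
      exact ⟨w, fun hRw => hp ⟨w, hRw, hw⟩, hw⟩
    · rintro ⟨w, hRw, hw⟩ ⟨w', hRw', hw'⟩
      exact hRw (hRw'.tail (Adj.of_ne_zero p hw' hw))
  have hS : IsClopen S :=
    ⟨isOpen_compl_iff.mp (hSc ▸ isOpen_setOf_exists_ne_zero _), isOpen_setOf_exists_ne_zero _⟩
  rcases isClopen_iff.mp hS with hS | hS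
  · have : vertexPoint hu ∈ S := ⟨u, .refl, by simp [vertexPoint_apply_ne_zero_iff]⟩
    simp [hS] at this
  · obtain ⟨w, hRw, hw⟩ : vertexPoint hv ∈ S := hS ▸ Set.mem_univ _
    rw [vertexPoint_apply_ne_zero_iff] at hw
    exact huv (hw ▸ hRw)

theorem connectedSpace_iff :
    ConnectedSpace L.space ↔ (∃ v, {v} ∈ L.faces) ∧ L.EdgePathConnected := by
  constructor
  · intro h
    obtain ⟨p⟩ := h.toNonempty
    obtain ⟨v, hv⟩ := exists_ne_zero p
    obtain ⟨-, -, s, hs, hsupp⟩ := p.2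
    exact ⟨⟨v, singleton_mem_of_mem hs (hsupp v hv)⟩, .of_connectedSpace⟩
  · rintro ⟨⟨v, hv⟩, h⟩
    have := h.pathConnectedSpace hv
    infer_instance

end Realization

section Purity

variable {V : Type} {K : ASC V}

lemma exists_isFacet_superset [Finite V] {s : Finset V} (hs : s ∈ K.faces) :
    ∃ τ, K.IsFacet τ ∧ s ⊆ τ := by
  obtain ⟨τ, hsτ, hmax⟩ := (Set.toFinite K.faces).exists_le_maximal hs
  exact ⟨τ, ⟨hmax.prop, fun t ht hτt => le_antisymm hτt (hmax.2 ht hτt)⟩, hsτ⟩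

variable [DecidableEq V]

lemma singleton_mem_link_iff {σ : Finset V} {v : V} :
    {v} ∈ (K.link σ).faces ↔ v ∉ σ ∧ insert v σ ∈ K.faces := by
  simp only [link, Set.mem_ofPred_eq, ← Finset.insert_eq, ← Finset.disjoint_iff_inter_eq_empty,
    Finset.disjoint_singleton_left]

lemma exists_singleton_mem_link_of_ssubset {σ τ : Finset V} (hτ : τ ∈ K.faces) (hστ : σ ⊂ τ) :
    ∃ w ∈ τ, {w} ∈ (K.link σ).faces := by
  obtain ⟨w, hwτ, hwσ⟩ := Finset.exists_of_ssubset hστ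
  exact ⟨w, hwτ, singleton_mem_link_iff.mpr
    ⟨hwσ, K.down_closed hτ (Finset.insert_subset hwτ hστ.subset)⟩⟩

lemma subset_of_isFacet {τ : Finset V} (hτ : K.IsFacet τ)
    (hlink : ∀ ρ ⊂ τ, (K.link ρ).EdgePathConnected) {s : Finset V} (hs : s ∈ K.faces) :
    s ⊆ τ := by
  refine Finset.strongDownwardInduction (n := τ.card)
    (p := fun ρ => ρ ⊆ τ → ∀ s ∈ K.faces, ρ ⊆ s → s ⊆ τ) ?_ ∅ (by simp)
    (Finset.empty_subset _) s hs (Finset.empty_subset _)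
  intro ρ ih _ hρτ s hs hρs
  obtain rfl | hρτ := hρτ.eq_or_ssubset
  · exact (hτ.2 s hs hρs).ge
  -- The induction hypothesis for `insert b ρ` keeps every link neighbour of `b ∈ τ` inside `τ`.
  have step : ∀ b x, b ∈ τ → (K.link ρ).Adj b x → x ∈ τ := by
    rintro b x hbτ ⟨t, ⟨hdisj, ht⟩, hbt, hxt⟩
    have hbρ : b ∉ ρ := fun hbρ => by simpa [hdisj] using Finset.mem_inter.mpr ⟨hbt, hbρ⟩
    have hbρτ : insert b ρ ⊆ τ := Finset.insert_subset hbτ hρτ.subset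
    refine ih (Finset.card_le_card hbρτ) (Finset.ssubset_insert hbρ) hbρτ (t ∪ ρ) ht ?_
      (Finset.mem_union_left _ hxt)
    exact Finset.insert_subset (Finset.mem_union_left _ hbt) Finset.subset_union_right
  obtain ⟨w, hwτ, hw⟩ := exists_singleton_mem_link_of_ssubset hτ.1 hρτ
  have reach : ∀ x, Relation.ReflTransGen (K.link ρ).Adj w x → x ∈ τ := fun x hx => by
    induction hx with
    | refl => exact hwτ
    | tail _ hadj ih => exact step _ _ ih hadj
  intro v hvs
  by_cases hvρ : v ∈ ρ
  · exact hρτ.subset hvρ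
  exact reach v <| hlink ρ hρτ w v hw <|
    singleton_mem_link_iff.mpr ⟨hvρ, K.down_closed hs (Finset.insert_subset hvs hρs)⟩

lemma dimF_eq_of_isFacet {n : ℤ} (hK : K.hasDim n)
    (hlink : ∀ ρ ∈ K.faces, dimF ρ ≤ n - 2 → (K.link ρ).EdgePathConnected) {τ : Finset V}
    (hτ : K.IsFacet τ) : dimF τ = n := by
  refine (hK.2 τ hτ.1).antisymm (not_lt.mp fun hlt => ?_)
  obtain ⟨s, hs, hsn⟩ := hK.1
  have hsτ := subset_of_isFacet hτ (fun ρ hρτ => hlink ρ (K.down_closed hτ.1 hρτ.subset) <| by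
    have := Finset.card_lt_card hρτ
    simp only [dimF] at hlt ⊢
    omega) hs
  have := Finset.card_le_card hsτ
  simp only [dimF] at hlt hsn
  omega

end Purity

end ASC

lemma isSerre_two_iff {V : Type} [LinearOrder V] (K : ASC V) (d : ℕ) :
    IsSerre k K d 2 ↔ ∀ σ ∈ K.faces, dimF σ ≤ (d : ℤ) - 3 → (K.link σ).EdgePathConnected := by
  simp only [IsSerre, lt_min_iff]
  constructor
  · intro h σ hσ hdim
    exact (subsingleton_simpRedHomology_zero_iff k _).mp (h σ hσ 0 ⟨by norm_num, by omega⟩)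
  · intro h σ hσ i ⟨hi, hdim⟩
    obtain rfl : i = 0 := by omega
    exact (subsingleton_simpRedHomology_zero_iff k _).mpr (h σ hσ (by omega))

lemma isNormal_iff {V : Type} [DecidableEq V] [Fintype V] {K : ASC V} {d : ℕ}
    (hK : K.hasDim ((d : ℤ) - 1)) :
    IsNormal K d ↔ ∀ σ ∈ K.faces, dimF σ ≤ (d : ℤ) - 3 → (K.link σ).EdgePathConnected := by
  constructor
  · exact fun h σ hσ hdim => (connectedSpace_iff.mp (h.2 σ hσ hdim)).2
  · intro h
    have hpure : ∀ τ, K.IsFacet τ → dimF τ = (d : ℤ) - 1 := fun τ =>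
      dimF_eq_of_isFacet hK fun ρ hρ hdim => h ρ hρ (by omega)
    refine ⟨hpure, fun σ hσ hdim => connectedSpace_iff.mpr ⟨?_, h σ hσ hdim⟩⟩
    obtain ⟨τ, hτ, hστ⟩ := exists_isFacet_superset hσ
    have hcard : σ.card < τ.card := by
      have := hpure τ hτ
      simp only [dimF] at this hdim
      omega
    obtain ⟨w, -, hw⟩ := exists_singleton_mem_link_of_ssubset hτ.1
      (hστ.ssubset_of_not_subset fun hτσ => (Finset.card_le_card hτσ).not_gt hcard)
    exact ⟨w, hw⟩

theorem serre_stmt_17 (N : ℕ) (K : ASC (Fin N)) (d : ℕ)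
    (hd : K.hasDim ((d : ℤ) - 1)) :
    (∀ (k : Type) [Field k], IsSerre k K d 2 → IsNormal K d) ∧
    (IsNormal K d → ∀ (k : Type) [Field k], IsSerre k K d 2) :=
  ⟨fun k _ h => (isNormal_iff hd).mpr ((isSerre_two_iff k K d).mp h),
    fun h k _ => (isSerre_two_iff k K d).mpr ((isNormal_iff hd).mp h)⟩


end
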